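/- Let X, Z have full column ranks with [X;Z] full column rank, and let y = Xw* + Zv* + e. Let θ̂ = [X;Z]†y be the joint least-squares estimate, and let ŷ = [X_a; Z_a]θ̂ be predictions on a (possibly larger) design [X_a; Z_a] with X_a full column rank. Then the distilled student estimate ŵ = X_a† ŷ satisfies ŵ = w* + X_a†Z_a v* + X_{Z,⊥}† e + X_a†Z_a Z_{X,⊥}† e, where X_{Z,⊥} (resp. Z_{X,⊥}) denotes X (resp. Z) projected orthogonally to the column space of Z (resp. X). -/

import Mathlib

open Matrix

/-- Auxiliary: residualized design is orthogonal to the projected-out block. -/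
lemma pfd_aux_resT {n d1 d2 : ℕ} (A : Matrix (Fin n) (Fin d1) ℝ) (B : Matrix (Fin n) (Fin d2) ℝ)
    (Ar : Matrix (Fin n) (Fin d1) ℝ) (hAr : Ar = A - B * (Bᵀ * B)⁻¹ * Bᵀ * A) :
    Arᵀ = Aᵀ - Aᵀ * B * (Bᵀ * B)⁻¹ * Bᵀ := by
  have h1 : ((Bᵀ * B)⁻¹)ᵀ = (Bᵀ * B)⁻¹ := by
    rw [transpose_nonsing_inv, transpose_mul, transpose_transpose]
  subst hAr
  simp [transpose_sub, transpose_mul, h1, Matrix.mul_assoc]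

lemma pfd_aux_orth {n d1 d2 : ℕ} (A : Matrix (Fin n) (Fin d1) ℝ) (B : Matrix (Fin n) (Fin d2) ℝ)
    (hB : IsUnit (Bᵀ * B).det)
    (Ar : Matrix (Fin n) (Fin d1) ℝ) (hAr : Ar = A - B * (Bᵀ * B)⁻¹ * Bᵀ * A) :
    Arᵀ * B = 0 := by
  rw [pfd_aux_resT A B Ar hAr, Matrix.sub_mul]
  rw [Matrix.mul_assoc (Aᵀ * B * (Bᵀ * B)⁻¹) Bᵀ B, nonsing_inv_mul_cancel_right _ _ hB,
    sub_self]

lemma pfd_aux_self {n d1 d2 : ℕ} (A : Matrix (Fin n) (Fin d1) ℝ) (B : Matrix (Fin n) (Fin d2) ℝ)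
    (hB : IsUnit (Bᵀ * B).det)
    (Ar : Matrix (Fin n) (Fin d1) ℝ) (hAr : Ar = A - B * (Bᵀ * B)⁻¹ * Bᵀ * A) :
    Arᵀ * A = Arᵀ * Ar := by
  nth_rewrite 3 [hAr]
  rw [Matrix.mul_sub,
    show Arᵀ * (B * (Bᵀ * B)⁻¹ * Bᵀ * A) = Arᵀ * B * ((Bᵀ * B)⁻¹ * (Bᵀ * A)) by
      simp [Matrix.mul_assoc],
    pfd_aux_orth A B hB Ar hAr, Matrix.zero_mul, sub_zero]

/-- Frisch–Waugh–Lovell style block extraction from the normal equations. -/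
lemma pfd_fwl_block {n d1 d2 : ℕ} (A : Matrix (Fin n) (Fin d1) ℝ) (B : Matrix (Fin n) (Fin d2) ℝ)
    (hB : IsUnit (Bᵀ * B).det)
    (Ar : Matrix (Fin n) (Fin d1) ℝ) (hAr : Ar = A - B * (Bᵀ * B)⁻¹ * Bᵀ * A)
    (hS : IsUnit (Arᵀ * Ar).det)
    (θ1 : Fin d1 → ℝ) (θ2 : Fin d2 → ℝ) (y : Fin n → ℝ)
    (eq1 : (Aᵀ * A) *ᵥ θ1 + (Aᵀ * B) *ᵥ θ2 = Aᵀ *ᵥ y)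
    (eq2 : (Bᵀ * A) *ᵥ θ1 + (Bᵀ * B) *ᵥ θ2 = Bᵀ *ᵥ y) :
    θ1 = ((Arᵀ * Ar)⁻¹ * Arᵀ) *ᵥ y := by
  have hArT := pfd_aux_resT A B Ar hAr
  have key : (Arᵀ * Ar) *ᵥ θ1 = Arᵀ *ᵥ y := by
    have hA2 : Arᵀ * Ar = Aᵀ * A - Aᵀ * B * (Bᵀ * B)⁻¹ * (Bᵀ * A) := by
      rw [← pfd_aux_self A B hB Ar hAr, hArT, Matrix.sub_mul, Matrix.mul_assoc]
    have hy' : Arᵀ *ᵥ y = Aᵀ *ᵥ y - (Aᵀ * B * (Bᵀ * B)⁻¹) *ᵥ (Bᵀ *ᵥ y) := by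
      rw [hArT, sub_mulVec, mulVec_mulVec]
    rw [hA2, sub_mulVec, hy', ← eq1, ← eq2, mulVec_add, mulVec_mulVec, mulVec_mulVec,
      nonsing_inv_mul_cancel_right _ _ hB]
    abel
  calc θ1 = ((Arᵀ * Ar)⁻¹ * (Arᵀ * Ar)) *ᵥ θ1 := by
        rw [nonsing_inv_mul _ hS, one_mulVec]
    _ = ((Arᵀ * Ar)⁻¹ * Arᵀ) *ᵥ y := by
        rw [← mulVec_mulVec, key, mulVec_mulVec]

/-- Algebraic decomposition of the PFD student estimator: the teacher regresses
`y = Xw* + Zv* + e` on `[X;Z]`, its predictions on the augmented design `[X_a; Z_a]` are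
regressed on `X_a` alone, giving
`ŵ = w* + X_a†Z_a v* + X_{Z,⊥}†e + X_a†Z_a Z_{X,⊥}†e`. -/
theorem pfd_student_decomposition {n N dx dz : ℕ}
    (X : Matrix (Fin n) (Fin dx) ℝ) (Z : Matrix (Fin n) (Fin dz) ℝ)
    (Xa : Matrix (Fin N) (Fin dx) ℝ) (Za : Matrix (Fin N) (Fin dz) ℝ)
    (hX : IsUnit (Xᵀ * X).det) (hZ : IsUnit (Zᵀ * Z).det)
    (hW : IsUnit ((fromCols X Z)ᵀ * fromCols X Z).det)
    (hXa : IsUnit (Xaᵀ * Xa).det)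
    (Xr : Matrix (Fin n) (Fin dx) ℝ) (hXrdef : Xr = X - Z * (Zᵀ * Z)⁻¹ * Zᵀ * X)
    (Zr : Matrix (Fin n) (Fin dz) ℝ) (hZrdef : Zr = Z - X * (Xᵀ * X)⁻¹ * Xᵀ * Z)
    (hXr : IsUnit (Xrᵀ * Xr).det) (hZr : IsUnit (Zrᵀ * Zr).det)
    (w : Fin dx → ℝ) (v : Fin dz → ℝ) (e : Fin n → ℝ) (y : Fin n → ℝ)
    (hy : y = X.mulVec w + Z.mulVec v + e)
    (θ : Fin dx ⊕ Fin dz → ℝ)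
    (hθ : θ = (((fromCols X Z)ᵀ * fromCols X Z)⁻¹ * (fromCols X Z)ᵀ).mulVec y)
    (yhat : Fin N → ℝ) (hyhat : yhat = (fromCols Xa Za).mulVec θ) :
    ((Xaᵀ * Xa)⁻¹ * Xaᵀ).mulVec yhat
      = w + ((Xaᵀ * Xa)⁻¹ * Xaᵀ * Za).mulVec v
        + ((Xrᵀ * Xr)⁻¹ * Xrᵀ).mulVec e
        + ((Xaᵀ * Xa)⁻¹ * Xaᵀ * Za * ((Zrᵀ * Zr)⁻¹ * Zrᵀ)).mulVec e := by
  set W := fromCols X Z with hWdef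
  -- normal equations
  have hnorm : (Wᵀ * W) *ᵥ θ = Wᵀ *ᵥ y := by
    rw [hθ, mulVec_mulVec, ← Matrix.mul_assoc, mul_nonsing_inv _ hW, Matrix.one_mul]
  have hblock : (Wᵀ * W) = fromBlocks (Xᵀ * X) (Xᵀ * Z) (Zᵀ * X) (Zᵀ * Z) := by
    rw [hWdef, transpose_fromCols, fromRows_mul_fromCols]
  have hWty : Wᵀ *ᵥ y = Sum.elim (Xᵀ *ᵥ y) (Zᵀ *ᵥ y) := by
    rw [hWdef, transpose_fromCols, fromRows_mulVec]
  rw [hblock, hWty, fromBlocks_mulVec] at hnorm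
  have eq1 : (Xᵀ * X) *ᵥ (θ ∘ Sum.inl) + (Xᵀ * Z) *ᵥ (θ ∘ Sum.inr) = Xᵀ *ᵥ y :=
    funext fun i => congrFun hnorm (Sum.inl i)
  have eq2 : (Zᵀ * X) *ᵥ (θ ∘ Sum.inl) + (Zᵀ * Z) *ᵥ (θ ∘ Sum.inr) = Zᵀ *ᵥ y :=
    funext fun i => congrFun hnorm (Sum.inr i)
  have eq2' : (Xᵀ * Z) *ᵥ (θ ∘ Sum.inr) + (Xᵀ * X) *ᵥ (θ ∘ Sum.inl) = Xᵀ *ᵥ y := by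
    rw [add_comm]; exact eq1
  have eq1' : (Zᵀ * Z) *ᵥ (θ ∘ Sum.inr) + (Zᵀ * X) *ᵥ (θ ∘ Sum.inl) = Zᵀ *ᵥ y := by
    rw [add_comm]; exact eq2
  have hθ1 : θ ∘ Sum.inl = ((Xrᵀ * Xr)⁻¹ * Xrᵀ) *ᵥ y :=
    pfd_fwl_block X Z hZ Xr hXrdef hXr _ _ y eq1 eq2
  have hθ2 : θ ∘ Sum.inr = ((Zrᵀ * Zr)⁻¹ * Zrᵀ) *ᵥ y :=
    pfd_fwl_block Z X hX Zr hZrdef hZr _ _ y eq1' eq2'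
  -- substitute y
  have hXrZ : Xrᵀ * Z = 0 := pfd_aux_orth X Z hZ Xr hXrdef
  have hZrX : Zrᵀ * X = 0 := pfd_aux_orth Z X hX Zr hZrdef
  have hXrX : Xrᵀ * X = Xrᵀ * Xr := pfd_aux_self X Z hZ Xr hXrdef
  have hZrZ : Zrᵀ * Z = Zrᵀ * Zr := pfd_aux_self Z X hX Zr hZrdef
  have hθ1' : θ ∘ Sum.inl = w + ((Xrᵀ * Xr)⁻¹ * Xrᵀ) *ᵥ e := by
    rw [hθ1, hy, mulVec_add, mulVec_add, mulVec_mulVec, mulVec_mulVec,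
      Matrix.mul_assoc _ Xrᵀ X, Matrix.mul_assoc _ Xrᵀ Z, hXrX, hXrZ, Matrix.mul_zero,
      zero_mulVec, add_zero, nonsing_inv_mul _ hXr, one_mulVec, ← mulVec_mulVec]
  have hθ2' : θ ∘ Sum.inr = v + ((Zrᵀ * Zr)⁻¹ * Zrᵀ) *ᵥ e := by
    rw [hθ2, hy, mulVec_add, mulVec_add, mulVec_mulVec, mulVec_mulVec,
      Matrix.mul_assoc _ Zrᵀ X, Matrix.mul_assoc _ Zrᵀ Z, hZrX, hZrZ, Matrix.mul_zero,
      zero_mulVec, zero_add, nonsing_inv_mul _ hZr, one_mulVec, ← mulVec_mulVec]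
  rw [← Sum.elim_comp_inl_inr θ, fromCols_mulVec_sumElim] at hyhat
  rw [hyhat, mulVec_add, hθ1', hθ2', mulVec_mulVec, mulVec_mulVec,
    Matrix.mul_assoc ((Xaᵀ * Xa)⁻¹) Xaᵀ Xa, nonsing_inv_mul _ hXa, one_mulVec,
    mulVec_add, mulVec_mulVec]
  abel
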